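/- For every integer k ≥ 2, the canonical projection p : L_k^♯ → ℝ does not have unique path lifting: there exist continuous maps γ̃₁, γ̃₂ : [0,1] → L_k^♯ with γ̃₁ ≠ γ̃₂, γ̃₁(0) = γ̃₂(0), and p ∘ γ̃₁ = p ∘ γ̃₂. In particular p is not a semicovering (semicoverings require continuous and unique lifting of paths from every point). -/

import Mathlib

/-- The gluing relation on `Fin k × ℝ`: `(i,x) ∼ (j,y)` iff `x = y` and
(`x ≠ 0` or `i = j`), i.e. all non-zero points are glued and the origins stay apart. -/
def lineSetoid (k : ℕ) : Setoid (Fin k × ℝ) where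
  r p q := p.2 = q.2 ∧ (p.2 ≠ 0 ∨ p.1 = q.1)
  iseqv := by
    constructor
    · exact fun p => ⟨rfl, Or.inr rfl⟩
    · rintro p q ⟨h1, h2⟩
      refine ⟨h1.symm, ?_⟩
      rcases h2 with h | h
      · exact Or.inl (h1 ▸ h)
      · exact Or.inr h.symm
    · rintro p q r ⟨h1, h2⟩ ⟨h3, h4⟩
      refine ⟨h1.trans h3, ?_⟩
      rcases h2 with h | h
      · exact Or.inl h
      · rcases h4 with h' | h'
        · exact Or.inl (h1.symm ▸ h')
        · exact Or.inr (h.trans h')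

/-- The line with `k` (inseparable) origins `L_k^♯`, as a quotient of `Fin k × ℝ`
equipped with the quotient topology. -/
def LineK (k : ℕ) : Type := Quotient (lineSetoid k)

instance (k : ℕ) : TopologicalSpace (LineK k) :=
  inferInstanceAs (TopologicalSpace (Quotient (lineSetoid k)))

/-- `[x]_i`, the class of the point `x` on the `i`-th copy of `ℝ`. -/
def LineK.mk (k : ℕ) (i : Fin k) (x : ℝ) : LineK k := Quotient.mk (lineSetoid k) (i, x)

/-- The `i`-th origin `o_i = [0]_i`. -/
def LineK.origin (k : ℕ) (i : Fin k) : LineK k := LineK.mk k i 0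

/-- The canonical projection `p : L_k^♯ → ℝ`, `[x]_i ↦ x`. -/
def LineK.proj (k : ℕ) : LineK k → ℝ :=
  Quotient.lift (fun p => p.2) (fun _ _ h => h.1)

namespace LineK

variable {k : ℕ}

theorem continuous_mk (i : Fin k) : Continuous (mk k i) :=
  continuous_quotient_mk'.comp (continuous_const.prodMk continuous_id)

theorem mk_eq_mk_of_ne_zero {x : ℝ} (hx : x ≠ 0) (i j : Fin k) : mk k i x = mk k j x :=
  Quotient.sound ⟨rfl, Or.inl hx⟩

theorem origin_injective : Function.Injective (origin k) := fun _ _ h =>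
  (Quotient.exact h).2.resolve_left (not_not.mpr rfl)

end LineK

/-- For every integer `k ≥ 2`, the canonical projection
`p : L_k^♯ → ℝ` does not have unique path lifting: there are two distinct
continuous paths in `L_k^♯` with the same starting point and the same
projection. In particular `p` is not a semicovering. -/
theorem stmt15 (k : ℕ) (hk : 2 ≤ k) :
    ∃ γ₁ γ₂ : unitInterval → LineK k,
      Continuous γ₁ ∧ Continuous γ₂ ∧ γ₁ ≠ γ₂ ∧ γ₁ 0 = γ₂ 0 ∧
      LineK.proj k ∘ γ₁ = LineK.proj k ∘ γ₂ := by
  -- Lifts of `t ↦ t - 1 / 2` through two different origins agree except at `t = 1 / 2`.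
  let i : Fin k := ⟨0, by omega⟩
  let j : Fin k := ⟨1, by omega⟩
  let lift (l : Fin k) (t : unitInterval) : LineK k := LineK.mk k l ((t : ℝ) - 1 / 2)
  have hcont (l : Fin k) : Continuous (lift l) :=
    (LineK.continuous_mk l).comp (continuous_subtype_val.sub continuous_const)
  refine ⟨lift i, lift j, hcont i, hcont j, fun h => ?_,
    LineK.mk_eq_mk_of_ne_zero (by norm_num) i j, rfl⟩
  have hmid := congrFun h ⟨1 / 2, by norm_num, by norm_num⟩
  have hij : i = j := LineK.origin_injective (by simpa [lift, LineK.origin] using hmid)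
  simp [i, j] at hij
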